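/- Let G contain the grid W_r as a minor with branch sets (V_h), and let T be the extension of the natural tangle of W_r to G. Then for every separation (A,B) ∈ T of order s, the small side A intersects at most s² branch sets: |{ h ∈ V(W_r) : V_h ∩ A ≠ ∅ }| ≤ s². -/

import Mathlib

/-- The `r`-grid. -/
def gridGraph (r : ℕ) : SimpleGraph (Fin r × Fin r) where
  Adj v w := Nat.dist v.1.val w.1.val + Nat.dist v.2.val w.2.val = 1
  symm := by
    constructor
    intro v w h
    simpa [Nat.dist_comm] using h
  loopless := by
    constructor
    intro v h
    simp [Nat.dist_self] at h

/-- `(A,B)` is a separation of `G`. -/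
def IsSeparation {V : Type*} [Fintype V] [DecidableEq V]
    (G : SimpleGraph V) (A B : Finset V) : Prop :=
  A ∪ B = Finset.univ ∧
    ∀ a ∈ A, a ∉ B → ∀ b ∈ B, b ∉ A → ¬ G.Adj a b

/-- `B` contains all vertices of some cross. -/
def ContainsCross {r : ℕ} (B : Finset (Fin r × Fin r)) : Prop :=
  ∃ i j : Fin r, ∀ v : Fin r × Fin r, v.1 = i ∨ v.2 = j → v ∈ B

/-- Minor model of `H` in `G`. -/
def IsMinorModel {V W : Type*} [Fintype V] [DecidableEq V]
    (G : SimpleGraph V) (H : SimpleGraph W) (M : W → Finset V) : Prop :=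
  (∀ h, (M h).Nonempty) ∧
  (∀ h, (G.induce (M h : Set V)).Connected) ∧
  (∀ h h', h ≠ h' → Disjoint (M h) (M h')) ∧
  (∀ h h', H.Adj h h' → ∃ a ∈ M h, ∃ b ∈ M h', G.Adj a b)

/-!
A branch set is connected, so if it meets both sides of a separation it meets the separator
`A ∩ B`; the branch sets being disjoint, at most `|A ∩ B|` of them are mixed in this way. A branch
set missing `B` lies in `A`, so all its grid neighbours meet `A`. Hence a row of the grid
that meets the small side but contains no mixed vertex meets it along its whole length, including
at the cross, whose branch sets all meet `B`; so such a vertex would be mixed after all. Thus every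
vertex whose branch set meets `A` shares its row with a mixed vertex and, likewise, its column:
these vertices lie in a product of at most `|A ∩ B|` rows and `|A ∩ B|` columns.
-/

open Finset SimpleGraph

theorem SimpleGraph.Preconnected.mem_of_adj_closed {W : Type*} {H : SimpleGraph W}
    (hH : H.Preconnected) {S : Set W} (hS : ∀ u v, H.Adj u v → u ∈ S → v ∈ S)
    {u : W} (hu : u ∈ S) (v : W) : v ∈ S := by
  by_contra hv
  obtain ⟨p⟩ := hH u v
  obtain ⟨d, -, hd₁, hd₂⟩ := p.exists_boundary_dart S hu hv
  exact hd₂ (hS _ _ d.adj hd₁)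

theorem SimpleGraph.Hom.exists_mem_of_closed_off {X W : Type*} {L : SimpleGraph X}
    {H : SimpleGraph W} (hL : L.Preconnected) (f : L →g H) {S Y : Set W}
    (hclosed : ∀ h h', H.Adj h h' → h ∈ S → h ∉ Y → h' ∈ S) {x y : X}
    (hx : f x ∈ S) (hy : f y ∈ S → f y ∈ Y) : ∃ z, f z ∈ Y := by
  by_contra! hY
  have hS : f y ∈ S :=
    hL.mem_of_adj_closed (S := f ⁻¹' S)
      (fun u v huv hu => hclosed _ _ (f.map_adj huv) hu (hY u)) hx y
  exact hY y (hy hS)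

namespace IsSeparation

variable {V : Type*} [Fintype V] [DecidableEq V] {G : SimpleGraph V} {A B : Finset V}

theorem mem_or_mem (hsep : IsSeparation G A B) (v : V) : v ∈ A ∨ v ∈ B :=
  mem_union.mp (hsep.1 ▸ mem_univ v)

theorem mem_left_of_adj (hsep : IsSeparation G A B) {a b : V} (ha : a ∈ A) (haB : a ∉ B)
    (hab : G.Adj a b) : b ∈ A := by
  by_contra hb
  exact hsep.2 a ha haB b ((hsep.mem_or_mem b).resolve_left hb) hb hab

theorem inter_nonempty_of_induce_connected (hsep : IsSeparation G A B) {s : Finset V}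
    (hs : (G.induce (s : Set V)).Connected) (hA : (s ∩ A).Nonempty) (hB : (s ∩ B).Nonempty) :
    (s ∩ (A ∩ B)).Nonempty := by
  by_contra hAB
  have hAB' : ∀ x ∈ s, x ∈ A → x ∉ B := fun x hx hxA hxB =>
    hAB ⟨x, mem_inter.mpr ⟨hx, mem_inter.mpr ⟨hxA, hxB⟩⟩⟩
  obtain ⟨a, ha⟩ := hA
  obtain ⟨b, hb⟩ := hB
  rw [mem_inter] at ha hb
  -- Off the separator, "not in `B`" means "in `A \ B`", which no edge leaves.
  have hclosed : ∀ x y : (s : Set V), (G.induce (s : Set V)).Adj x y →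
      (x : V) ∉ B → (y : V) ∉ B := fun x y hxy hxB =>
    have hxA := (hsep.mem_or_mem x).resolve_right hxB
    hAB' y y.2 (hsep.mem_left_of_adj hxA hxB hxy)
  exact hs.preconnected.mem_of_adj_closed (S := {x | (x : V) ∉ B}) hclosed
    (u := ⟨a, ha.1⟩) (hAB' a ha.1 ha.2) ⟨b, hb.1⟩ hb.2

end IsSeparation

namespace IsMinorModel

variable {V W : Type*} [Fintype V] [DecidableEq V] {G : SimpleGraph V} {H : SimpleGraph W}
  {M : W → Finset V} {A B : Finset V}

theorem inter_nonempty_of_adj (hM : IsMinorModel G H M) (hsep : IsSeparation G A B) {h h' : W}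
    (hadj : H.Adj h h') (hB : ¬(M h ∩ B).Nonempty) :
    (M h' ∩ A).Nonempty := by
  obtain ⟨a, ha, b, hb, hab⟩ := hM.2.2.2 h h' hadj
  have haB : a ∉ B := fun haB => hB ⟨a, mem_inter.mpr ⟨ha, haB⟩⟩
  have haA : a ∈ A := (hsep.mem_or_mem a).resolve_right haB
  exact ⟨b, mem_inter.mpr ⟨hb, hsep.mem_left_of_adj haA haB hab⟩⟩

theorem card_filter_inter_nonempty_le [Fintype W] (hM : IsMinorModel G H M)
    (hsep : IsSeparation G A B) :
    #{h | (M h ∩ A).Nonempty ∧ (M h ∩ B).Nonempty} ≤ #(A ∩ B) := by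
  set Y : Finset W := {h | (M h ∩ A).Nonempty ∧ (M h ∩ B).Nonempty}
  calc #Y ≤ #(Y.biUnion fun h => M h ∩ (A ∩ B)) :=
        card_le_card_biUnion
          (fun h _ h' _ hne => (hM.2.2.1 h h' hne).mono inter_subset_left inter_subset_left)
          (fun h hh => have hh := (mem_filter.mp hh).2
            hsep.inter_nonempty_of_induce_connected (hM.2.1 h) hh.1 hh.2)
    _ ≤ #(A ∩ B) := card_le_card (biUnion_subset.mpr fun _ _ => inter_subset_right)

end IsMinorModel

namespace gridGraph

theorem adj_of_pathGraph_adj_right {r : ℕ} (a : Fin r) {c c' : Fin r}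
    (h : (pathGraph r).Adj c c') : (gridGraph r).Adj (a, c) (a, c') := by
  rw [pathGraph_adj] at h
  change Nat.dist a a + Nat.dist c c' = 1
  simp only [Nat.dist]
  omega

theorem adj_of_pathGraph_adj_left {r : ℕ} (b : Fin r) {c c' : Fin r}
    (h : (pathGraph r).Adj c c') : (gridGraph r).Adj (c, b) (c', b) := by
  rw [pathGraph_adj] at h
  change Nat.dist c c' + Nat.dist b b = 1
  simp only [Nat.dist]
  omega

def row {r : ℕ} (a : Fin r) : pathGraph r →g gridGraph r :=
  ⟨fun c => (a, c), adj_of_pathGraph_adj_right a⟩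

def column {r : ℕ} (b : Fin r) : pathGraph r →g gridGraph r :=
  ⟨fun c => (c, b), adj_of_pathGraph_adj_left b⟩

theorem card_le_sq_of_closed_off {r : ℕ} {S Y : Finset (Fin r × Fin r)} (i j : Fin r)
    (hclosed : ∀ h h', (gridGraph r).Adj h h' → h ∈ S → h ∉ Y → h' ∈ S)
    (hcross : ∀ h ∈ S, h.1 = i ∨ h.2 = j → h ∈ Y) : #S ≤ #Y ^ 2 := by
  have hsub : S ⊆ Y.image Prod.fst ×ˢ Y.image Prod.snd := by
    intro h hh
    obtain ⟨c, hc⟩ := (row h.1).exists_mem_of_closed_off (pathGraph_preconnected r)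
      (S := S) (Y := Y) hclosed (x := h.2) (y := j) hh (hcross _ · (Or.inr rfl))
    obtain ⟨c', hc'⟩ := (column h.2).exists_mem_of_closed_off (pathGraph_preconnected r)
      (S := S) (Y := Y) hclosed (x := h.1) (y := i) hh (hcross _ · (Or.inl rfl))
    exact mem_product.mpr ⟨mem_image.mpr ⟨_, hc, rfl⟩, mem_image.mpr ⟨_, hc', rfl⟩⟩
  calc #S ≤ #(Y.image Prod.fst) * #(Y.image Prod.snd) := card_product _ _ ▸ card_le_card hsub
    _ ≤ #Y * #Y := Nat.mul_le_mul card_image_le card_image_le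
    _ = #Y ^ 2 := (sq _).symm

end gridGraph

theorem small_side_meets_few_branch_sets_general {V : Type*} [Fintype V] [DecidableEq V]
    (G : SimpleGraph V) (r : ℕ) (M : Fin r × Fin r → Finset V)
    (hM : IsMinorModel G (gridGraph r) M)
    (A B : Finset V) (hsep : IsSeparation G A B)
    (hcross : ContainsCross (Finset.univ.filter fun h => (M h ∩ B).Nonempty)) :
    (Finset.univ.filter fun h => (M h ∩ A).Nonempty).card ≤ (A ∩ B).card ^ 2 := by
  obtain ⟨i, j, hij⟩ := hcross
  calc #{h | (M h ∩ A).Nonempty}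
      ≤ #{h | (M h ∩ A).Nonempty ∧ (M h ∩ B).Nonempty} ^ 2 := by
        refine gridGraph.card_le_sq_of_closed_off i j ?_ ?_
        · intro h h' hadj hA hmixed
          simp only [mem_filter, mem_univ, true_and, not_and] at hA hmixed ⊢
          exact hM.inter_nonempty_of_adj hsep hadj (hmixed hA)
        · intro h hA hh
          simp only [mem_filter, mem_univ, true_and] at hA ⊢
          exact ⟨hA, (mem_filter.mp (hij h hh)).2⟩
    _ ≤ #(A ∩ B) ^ 2 := Nat.pow_le_pow_left (hM.card_filter_inter_nonempty_le hsep) 2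

/-- Let `G` contain the `r`-grid as a minor with branch sets `M`.  For every
separation `(A,B)` of `G` in the extension of the natural tangle of the grid
(i.e. of order `s < r` and with the induced big side containing a cross), the
small side `A` intersects at most `s²` branch sets. -/
theorem small_side_meets_few_branch_sets {V : Type*} [Fintype V] [DecidableEq V]
    (G : SimpleGraph V) (r : ℕ) (M : Fin r × Fin r → Finset V)
    (hM : IsMinorModel G (gridGraph r) M)
    (A B : Finset V) (hsep : IsSeparation G A B) (hord : (A ∩ B).card < r)
    (hcross : ContainsCross (Finset.univ.filter fun h => (M h ∩ B).Nonempty)) :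
    (Finset.univ.filter fun h => (M h ∩ A).Nonempty).card ≤ (A ∩ B).card ^ 2 :=
  small_side_meets_few_branch_sets_general G r M hM A B hsep hcross
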